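/- arXiv:2406.01255 — 2 statements merged into one kernel-verified Lean document; each statement's English description precedes it below -/
import Mathlib

section
/- Let X_1, X_2 ∈ R^{d×m}. Define M = Σ_{c=1}^2 Σ_{i=1}^m (x_{ci} - x̄_c)(x_{ci} - x̄_c)^T and N = Σ_{c=1}^2 Σ_{i=1}^m (x_{ci} - x̄)(x_{ci} - x̄)^T, where x̄_c is the mean of class c and x̄ = (x̄_1+x̄_2)/2. Suppose N is invertible. Then LSSR(X_1, X_2) = λ*, the minimum eigenvalue of N^{-1}M, and LSSR(X_1,X_2) = SSR((u*)^T X_1, (u*)^T X_2) where u* is an eigenvector of N^{-1}M for λ*. -/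
open scoped BigOperators
open Matrix

/-- Mean of the columns (samples) of `X`. -/
noncomputable def colMean {m d : ℕ} (X : Fin m → Fin d → ℝ) : Fin d → ℝ :=
  fun k => (∑ i, X i k) / m

/-- Sum of squares: sum of squared Euclidean distances of the samples to their mean. -/
noncomputable def SS {m d : ℕ} (X : Fin m → Fin d → ℝ) : ℝ :=
  ∑ i, ∑ k, (X i k - colMean X k) ^ 2

/-- Sum of squares ratio of two classes of samples. -/
noncomputable def SSR {m₁ m₂ d : ℕ} (X₁ : Fin m₁ → Fin d → ℝ) (X₂ : Fin m₂ → Fin d → ℝ) : ℝ :=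
  (SS X₁ + SS X₂) / SS (Fin.append X₁ X₂)

/-- `LSSR(X₁,X₂)`: the infimum of `SSR(φ(X₁), φ(X₂))` over all affine maps
`φ(x) = W x + b : ℝ^d → ℝ^n` (any `n`) such that `SS([φ(X₁),φ(X₂)]) ≠ 0`. -/
noncomputable def LSSR {m d : ℕ} (X₁ X₂ : Fin m → Fin d → ℝ) : ℝ :=
  sInf {r : ℝ | ∃ (n : ℕ) (W : Matrix (Fin n) (Fin d) ℝ) (b : Fin n → ℝ),
    SS (Fin.append (fun i => W.mulVec (X₁ i) + b) (fun i => W.mulVec (X₂ i) + b)) ≠ 0 ∧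
    r = SSR (fun i => W.mulVec (X₁ i) + b) (fun i => W.mulVec (X₂ i) + b)}

/-- Within-class scatter matrix `M = Σ_c Σ_i (x_ci - x̄_c)(x_ci - x̄_c)ᵀ`. -/
noncomputable def withinScatter {m d : ℕ} (X₁ X₂ : Fin m → Fin d → ℝ) :
    Matrix (Fin d) (Fin d) ℝ :=
  (∑ i, vecMulVec (X₁ i - colMean X₁) (X₁ i - colMean X₁)) +
    ∑ i, vecMulVec (X₂ i - colMean X₂) (X₂ i - colMean X₂)

/-- Total scatter matrix `N = Σ_c Σ_i (x_ci - x̄)(x_ci - x̄)ᵀ`, `x̄ = (x̄₁ + x̄₂)/2`. -/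
noncomputable def totalScatter {m d : ℕ} (X₁ X₂ : Fin m → Fin d → ℝ) :
    Matrix (Fin d) (Fin d) ℝ :=
  (∑ i, vecMulVec (X₁ i - fun k => (colMean X₁ k + colMean X₂ k) / 2)
      (X₁ i - fun k => (colMean X₁ k + colMean X₂ k) / 2)) +
    ∑ i, vecMulVec (X₂ i - fun k => (colMean X₁ k + colMean X₂ k) / 2)
      (X₂ i - fun k => (colMean X₁ k + colMean X₂ k) / 2)

/-! ### Auxiliary lemmas -/

lemma auxDotSym {d : ℕ} (A : Matrix (Fin d) (Fin d) ℝ) (hsym : Aᵀ = A) (v w : Fin d → ℝ) :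
    w ⬝ᵥ A.mulVec v = v ⬝ᵥ A.mulVec w := by
  rw [Matrix.dotProduct_mulVec, ← Matrix.mulVec_transpose, hsym, dotProduct_comm]

/-- If `A` is symmetric positive semidefinite and `w₀ᵀ A w₀ = 0` then `A w₀ = 0`. -/
lemma auxKeyZero {d : ℕ} (A : Matrix (Fin d) (Fin d) ℝ) (hsym : Aᵀ = A)
    (hpsd : ∀ w, 0 ≤ w ⬝ᵥ A.mulVec w) (w₀ : Fin d → ℝ) (h0 : w₀ ⬝ᵥ A.mulVec w₀ = 0) :
    A.mulVec w₀ = 0 := by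
  have key : ∀ v : Fin d → ℝ, v ⬝ᵥ A.mulVec w₀ = 0 := by
    intro v
    set a := v ⬝ᵥ A.mulVec w₀ with ha
    set b := v ⬝ᵥ A.mulVec v with hb
    by_contra hne
    set t : ℝ := -a / (|b| + 1) with ht
    have hb1 : (0:ℝ) < |b| + 1 := by positivity
    have hexp : (w₀ + t • v) ⬝ᵥ A.mulVec (w₀ + t • v) = 2 * t * a + t ^ 2 * b := by
      rw [Matrix.mulVec_add, Matrix.mulVec_smul]
      simp only [add_dotProduct, smul_dotProduct, dotProduct_add,
        dotProduct_smul, smul_eq_mul, h0]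
      have : w₀ ⬝ᵥ A.mulVec v = a := by rw [ha, auxDotSym A hsym]
      rw [this]; ring
    have hge := hpsd (w₀ + t • v)
    rw [hexp] at hge
    have hc : (|b| + 1) ≠ 0 := ne_of_gt hb1
    have h3 : (2 * t * a + t ^ 2 * b) * (|b| + 1) ^ 2 = -2 * a^2 * (|b|+1) + a^2 * b := by
      rw [ht]; field_simp
    have h4 : 0 ≤ -2 * a^2 * (|b|+1) + a^2 * b := by
      rw [← h3]; positivity
    have ha2 : 0 < a ^ 2 := by positivity
    nlinarith [le_abs_self b, abs_nonneg b]
  have := key (A.mulVec w₀)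
  rwa [dotProduct_self_eq_zero] at this

lemma auxSumMulVec {ι d : ℕ} (s : Finset (Fin ι)) (M : Fin ι → Matrix (Fin d) (Fin d) ℝ)
    (w : Fin d → ℝ) : (∑ i ∈ s, M i).mulVec w = ∑ i ∈ s, (M i).mulVec w := by
  funext k
  simp only [mulVec, dotProduct, Matrix.sum_apply, Finset.sum_apply, Finset.sum_mul]
  rw [Finset.sum_comm]

lemma auxDotSum {ι d : ℕ} (s : Finset (Fin ι)) (v : Fin ι → Fin d → ℝ) (w : Fin d → ℝ) :
    w ⬝ᵥ (∑ i ∈ s, v i) = ∑ i ∈ s, w ⬝ᵥ v i := by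
  simp only [dotProduct, Finset.sum_apply, Finset.mul_sum]
  rw [Finset.sum_comm]

lemma auxQuadVecMulVec {d : ℕ} (v w : Fin d → ℝ) :
    w ⬝ᵥ (vecMulVec v v).mulVec w = (v ⬝ᵥ w)^2 := by
  simp only [vecMulVec, mulVec, dotProduct, of_apply, pow_two, Finset.sum_mul,
    Finset.mul_sum]
  exact Finset.sum_congr rfl fun i _ => Finset.sum_congr rfl fun j _ => by ring

lemma auxQuadSum {ι d : ℕ} (f : Fin ι → Fin d → ℝ) (w : Fin d → ℝ) :
    w ⬝ᵥ (∑ i, vecMulVec (f i) (f i)).mulVec w = ∑ i, (f i ⬝ᵥ w)^2 := by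
  rw [auxSumMulVec, auxDotSum]
  exact Finset.sum_congr rfl fun i _ => auxQuadVecMulVec _ _

lemma auxVecMulVecSymm {d : ℕ} (v : Fin d → ℝ) : (vecMulVec v v)ᵀ = vecMulVec v v := by
  ext i j
  simp [vecMulVec_apply, transpose_apply, mul_comm]

lemma auxColMeanAffine {m n d : ℕ} (hm : (m:ℝ) ≠ 0) (X : Fin m → Fin d → ℝ)
    (W : Matrix (Fin n) (Fin d) ℝ) (b : Fin n → ℝ) :
    colMean (fun i => W.mulVec (X i) + b) = fun k => W.mulVec (colMean X) k + b k := by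
  funext k
  simp only [colMean, mulVec, dotProduct, Pi.add_apply]
  rw [Finset.sum_add_distrib, Finset.sum_const, Finset.card_univ, Fintype.card_fin,
    Finset.sum_comm, add_div]
  congr 1
  · rw [Finset.sum_div]
    congr 1; funext j
    rw [← Finset.mul_sum, mul_div_assoc]
  · rw [nsmul_eq_mul]; field_simp

lemma auxSSAffine {m n d : ℕ} (hm : (m:ℝ) ≠ 0) (X : Fin m → Fin d → ℝ)
    (W : Matrix (Fin n) (Fin d) ℝ) (b : Fin n → ℝ) :
    SS (fun i => W.mulVec (X i) + b)
      = ∑ k, ∑ i, ((X i - colMean X) ⬝ᵥ (fun j => W k j)) ^ 2 := by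
  rw [SS, auxColMeanAffine hm X W b, Finset.sum_comm]
  congr 1; funext k; congr 1; funext i
  congr 1
  simp only [Pi.add_apply, mulVec, dotProduct, Pi.sub_apply]
  rw [add_sub_add_right_eq_sub, ← Finset.sum_sub_distrib]
  congr 1; funext j; ring

lemma auxAppendAffine {m n d : ℕ} (X₁ X₂ : Fin m → Fin d → ℝ)
    (W : Matrix (Fin n) (Fin d) ℝ) (b : Fin n → ℝ) :
    Fin.append (fun i => W.mulVec (X₁ i) + b) (fun i => W.mulVec (X₂ i) + b)
      = fun i => W.mulVec (Fin.append X₁ X₂ i) + b := by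
  funext i
  induction i using Fin.addCases with
  | left i => simp [Fin.append_left]
  | right i => rw [Fin.append_right, Fin.append_right]

lemma auxColMeanAppend {m d : ℕ} (hm : (m:ℝ) ≠ 0) (X₁ X₂ : Fin m → Fin d → ℝ) :
    colMean (Fin.append X₁ X₂) = fun k => (colMean X₁ k + colMean X₂ k) / 2 := by
  funext k
  simp only [colMean]
  rw [Fin.sum_univ_add]
  simp only [Fin.append_left, Fin.append_right, Nat.cast_add]
  rw [← add_div, div_div]
  congr 1
  ring

lemma auxQuadCont {d : ℕ} (A : Matrix (Fin d) (Fin d) ℝ) :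
    Continuous fun w : Fin d → ℝ => w ⬝ᵥ A.mulVec w := by
  simp only [dotProduct, mulVec]
  exact continuous_finset_sum _ fun i _ => (continuous_apply i).mul
    (continuous_finset_sum _ fun j _ => continuous_const.mul (continuous_apply j))

lemma auxQuadSmul {d : ℕ} (A : Matrix (Fin d) (Fin d) ℝ) (c : ℝ) (w : Fin d → ℝ) :
    (c • w) ⬝ᵥ A.mulVec (c • w) = c^2 * (w ⬝ᵥ A.mulVec w) := by
  rw [Matrix.mulVec_smul, smul_dotProduct, dotProduct_smul]
  simp only [smul_eq_mul]
  ring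

/-- if `N` is invertible and `λ*`, `u*` are the minimal eigenvalue of `N⁻¹M`
and a corresponding eigenvector, then `LSSR(X₁,X₂) = λ*` and
`LSSR(X₁,X₂) = SSR((u*)ᵀX₁, (u*)ᵀX₂)`. -/
theorem lssr_eq_min_eigenvalue {m d : ℕ} (X₁ X₂ : Fin m → Fin d → ℝ)
    (hN : IsUnit (totalScatter X₁ X₂)) (lam : ℝ) (u : Fin d → ℝ) (hu : u ≠ 0)
    (heig : ((totalScatter X₁ X₂)⁻¹ * withinScatter X₁ X₂).mulVec u = lam • u)
    (hmin : ∀ (μ : ℝ) (v : Fin d → ℝ), v ≠ 0 →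
      ((totalScatter X₁ X₂)⁻¹ * withinScatter X₁ X₂).mulVec v = μ • v → lam ≤ μ) :
    LSSR X₁ X₂ = lam ∧
      LSSR X₁ X₂ =
        SSR (fun i (_ : Fin 1) => u ⬝ᵥ X₁ i) (fun i (_ : Fin 1) => u ⬝ᵥ X₂ i) := by
  classical
  obtain ⟨j0, hj0⟩ : ∃ j, u j ≠ 0 := Function.ne_iff.mp hu
  haveI : Nonempty (Fin d) := ⟨j0⟩
  set Mw := withinScatter X₁ X₂ with hMwdef
  set Nt := totalScatter X₁ X₂ with hNtdef
  set xbar : Fin d → ℝ := fun k => (colMean X₁ k + colMean X₂ k) / 2 with hxbar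
  -- m ≠ 0
  have hm : (m:ℝ) ≠ 0 := by
    rcases Nat.eq_zero_or_pos m with hm0 | hmp
    · exfalso
      have hz : Nt = 0 := by
        rw [hNtdef, totalScatter]
        subst hm0
        simp
      rw [hz] at hN
      have := (Matrix.isUnit_iff_isUnit_det (0 : Matrix (Fin d) (Fin d) ℝ)).mp hN
      rw [Matrix.det_zero] at this
      exact this.ne_zero rfl
    · exact Nat.cast_ne_zero.mpr hmp.ne'
  have hdet : IsUnit Nt.det := (Matrix.isUnit_iff_isUnit_det Nt).mp hN
  -- quadratic forms
  have hqM : ∀ w, w ⬝ᵥ Mw.mulVec w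
      = (∑ i, ((X₁ i - colMean X₁) ⬝ᵥ w)^2) + ∑ i, ((X₂ i - colMean X₂) ⬝ᵥ w)^2 := by
    intro w
    rw [hMwdef, withinScatter, Matrix.add_mulVec, dotProduct_add,
      auxQuadSum, auxQuadSum]
  have hqN : ∀ w, w ⬝ᵥ Nt.mulVec w
      = (∑ i, ((X₁ i - xbar) ⬝ᵥ w)^2) + ∑ i, ((X₂ i - xbar) ⬝ᵥ w)^2 := by
    intro w
    rw [hNtdef, totalScatter, Matrix.add_mulVec, dotProduct_add,
      auxQuadSum, auxQuadSum]
  have hqM0 : ∀ w, 0 ≤ w ⬝ᵥ Mw.mulVec w := by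
    intro w; rw [hqM]; positivity
  have hqN0 : ∀ w, 0 ≤ w ⬝ᵥ Nt.mulVec w := by
    intro w; rw [hqN]; positivity
  have hMsym : Mwᵀ = Mw := by
    rw [hMwdef, withinScatter, Matrix.transpose_add, Matrix.transpose_sum,
      Matrix.transpose_sum]
    congr 1 <;> exact Finset.sum_congr rfl fun i _ => auxVecMulVecSymm _
  have hNsym : Ntᵀ = Nt := by
    rw [hNtdef, totalScatter, Matrix.transpose_add, Matrix.transpose_sum,
      Matrix.transpose_sum]
    congr 1 <;> exact Finset.sum_congr rfl fun i _ => auxVecMulVecSymm _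
  -- positive definiteness of Nt
  have hqNzero : ∀ w, w ⬝ᵥ Nt.mulVec w = 0 → w = 0 := by
    intro w h
    have hz := auxKeyZero Nt hNsym hqN0 w h
    have h2 : (Nt⁻¹ * Nt).mulVec w = 0 := by
      rw [← Matrix.mulVec_mulVec, hz, Matrix.mulVec_zero]
    rwa [Matrix.nonsing_inv_mul Nt hdet, Matrix.one_mulVec] at h2
  have hqNpos : ∀ w, w ≠ 0 → 0 < w ⬝ᵥ Nt.mulVec w := by
    intro w hw
    rcases lt_or_eq_of_le (hqN0 w) with h | h
    · exact h
    · exact absurd (hqNzero w h.symm) hw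
  -- M u = lam • N u
  have hMu : Mw.mulVec u = lam • Nt.mulVec u := by
    have h1 : Nt.mulVec ((Nt⁻¹ * Mw).mulVec u) = Mw.mulVec u := by
      rw [Matrix.mulVec_mulVec, ← Matrix.mul_assoc, Matrix.mul_nonsing_inv Nt hdet,
        Matrix.one_mul]
    rw [heig, Matrix.mulVec_smul] at h1
    exact h1.symm
  have hqMu : u ⬝ᵥ Mw.mulVec u = lam * (u ⬝ᵥ Nt.mulVec u) := by
    rw [hMu, dotProduct_smul, smul_eq_mul]
  -- Rayleigh bound
  have hRay : ∀ w, lam * (w ⬝ᵥ Nt.mulVec w) ≤ w ⬝ᵥ Mw.mulVec w := by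
    set g : (Fin d → ℝ) → ℝ := fun w => (w ⬝ᵥ Mw.mulVec w) / (w ⬝ᵥ Nt.mulVec w) with hg
    have hcont : ContinuousOn g (Metric.sphere (0 : Fin d → ℝ) 1) :=
      ((auxQuadCont Mw).continuousOn).div ((auxQuadCont Nt).continuousOn)
        (fun w hw => ne_of_gt (hqNpos w (by
          intro h
          rw [mem_sphere_zero_iff_norm, h, norm_zero] at hw
          exact one_ne_zero hw.symm)))
    have hne : (Metric.sphere (0 : Fin d → ℝ) 1).Nonempty := by
      refine ⟨‖u‖⁻¹ • u, ?_⟩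
      rw [mem_sphere_zero_iff_norm, norm_smul, norm_inv, norm_norm,
        inv_mul_cancel₀ (norm_ne_zero_iff.mpr hu)]
    obtain ⟨w₀, hw₀mem, hw₀min⟩ := (isCompact_sphere (0 : Fin d → ℝ) 1).exists_isMinOn
      hne hcont
    have hw₀ne : w₀ ≠ 0 := by
      intro h
      rw [mem_sphere_zero_iff_norm, h, norm_zero] at hw₀mem
      exact one_ne_zero hw₀mem.symm
    set μ := g w₀ with hμ
    have hgmin : ∀ w, w ≠ 0 → μ ≤ g w := by
      intro w hw
      have hnw : ‖w‖ ≠ 0 := norm_ne_zero_iff.mpr hw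
      have hmem : ‖w‖⁻¹ • w ∈ Metric.sphere (0 : Fin d → ℝ) 1 := by
        rw [mem_sphere_zero_iff_norm, norm_smul, norm_inv, norm_norm,
          inv_mul_cancel₀ hnw]
      have h1 := isMinOn_iff.mp hw₀min _ hmem
      have h2 : g (‖w‖⁻¹ • w) = g w := by
        rw [hg]
        simp only
        rw [auxQuadSmul, auxQuadSmul, mul_div_mul_left _ _ (by positivity : ((‖w‖⁻¹)^2 : ℝ) ≠ 0)]
      rwa [h2] at h1
    have hf : ∀ w, μ * (w ⬝ᵥ Nt.mulVec w) ≤ w ⬝ᵥ Mw.mulVec w := by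
      intro w
      by_cases hw : w = 0
      · subst hw
        simp [zero_dotProduct]
      · have h1 := hgmin w hw
        rw [hg] at h1
        exact (le_div_iff₀ (hqNpos w hw)).mp h1
    have hfw₀ : w₀ ⬝ᵥ (Mw - μ • Nt).mulVec w₀ = 0 := by
      rw [Matrix.sub_mulVec, dotProduct_sub, Matrix.smul_mulVec,
        dotProduct_smul, smul_eq_mul, hμ, hg]
      simp only
      rw [div_mul_cancel₀ _ (ne_of_gt (hqNpos w₀ hw₀ne)), sub_self]
    have hApsd : ∀ w, 0 ≤ w ⬝ᵥ (Mw - μ • Nt).mulVec w := by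
      intro w
      rw [Matrix.sub_mulVec, dotProduct_sub, Matrix.smul_mulVec,
        dotProduct_smul, smul_eq_mul, sub_nonneg]
      exact hf w
    have hAsym : (Mw - μ • Nt)ᵀ = Mw - μ • Nt := by
      rw [Matrix.transpose_sub, Matrix.transpose_smul, hMsym, hNsym]
    have hAz := auxKeyZero _ hAsym hApsd w₀ hfw₀
    have hMw₀ : Mw.mulVec w₀ = μ • Nt.mulVec w₀ := by
      rw [Matrix.sub_mulVec, sub_eq_zero, Matrix.smul_mulVec] at hAz
      exact hAz
    have heigw₀ : (Nt⁻¹ * Mw).mulVec w₀ = μ • w₀ := by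
      rw [← Matrix.mulVec_mulVec, hMw₀, Matrix.mulVec_smul, Matrix.mulVec_mulVec,
        Matrix.nonsing_inv_mul Nt hdet, Matrix.one_mulVec]
    have hlamμ : lam ≤ μ := hmin μ w₀ hw₀ne heigw₀
    intro w
    calc lam * (w ⬝ᵥ Nt.mulVec w) ≤ μ * (w ⬝ᵥ Nt.mulVec w) :=
          mul_le_mul_of_nonneg_right hlamμ (hqN0 w)
      _ ≤ w ⬝ᵥ Mw.mulVec w := hf w
  -- SS computations
  have hm2 : ((m + m : ℕ) : ℝ) ≠ 0 := by
    push_cast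
    intro h
    apply hm
    have : (m:ℝ) = 0 := by linarith [(Nat.cast_nonneg m : (0:ℝ) ≤ m)]
    exact this
  have hSSsum : ∀ (n : ℕ) (W : Matrix (Fin n) (Fin d) ℝ) (b : Fin n → ℝ),
      SS (fun i => W.mulVec (X₁ i) + b) + SS (fun i => W.mulVec (X₂ i) + b)
        = ∑ k, (fun j => W k j) ⬝ᵥ Mw.mulVec (fun j => W k j) := by
    intro n W b
    rw [auxSSAffine hm X₁ W b, auxSSAffine hm X₂ W b, ← Finset.sum_add_distrib]
    exact Finset.sum_congr rfl fun k _ => (hqM _).symm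
  have hSSapp : ∀ (n : ℕ) (W : Matrix (Fin n) (Fin d) ℝ) (b : Fin n → ℝ),
      SS (Fin.append (fun i => W.mulVec (X₁ i) + b) (fun i => W.mulVec (X₂ i) + b))
        = ∑ k, (fun j => W k j) ⬝ᵥ Nt.mulVec (fun j => W k j) := by
    intro n W b
    rw [auxAppendAffine X₁ X₂ W b, auxSSAffine hm2 (Fin.append X₁ X₂) W b]
    refine Finset.sum_congr rfl fun k _ => ?_
    rw [hqN, auxColMeanAppend hm X₁ X₂, Fin.sum_univ_add]
    congr 1
    · exact Finset.sum_congr rfl fun i _ => by rw [Fin.append_left]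
    · exact Finset.sum_congr rfl fun i _ => by rw [Fin.append_right]
  -- the value at u
  have huNpos : 0 < u ⬝ᵥ Nt.mulVec u := hqNpos u hu
  set Wu : Matrix (Fin 1) (Fin d) ℝ := fun _ j => u j with hWu
  have hWuRow : (fun j => Wu 0 j) = u := rfl
  have hval : SSR (fun i => Wu.mulVec (X₁ i) + 0) (fun i => Wu.mulVec (X₂ i) + 0) = lam := by
    rw [SSR, hSSsum 1 Wu 0, hSSapp 1 Wu 0, Fin.sum_univ_one, Fin.sum_univ_one, hWuRow,
      hqMu]
    field_simp
  have hden : SS (Fin.append (fun i => Wu.mulVec (X₁ i) + 0) (fun i => Wu.mulVec (X₂ i) + 0))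
      ≠ 0 := by
    rw [hSSapp 1 Wu 0, Fin.sum_univ_one, hWuRow]
    exact ne_of_gt huNpos
  -- LSSR = lam
  have hLeast : IsLeast {r : ℝ | ∃ (n : ℕ) (W : Matrix (Fin n) (Fin d) ℝ) (b : Fin n → ℝ),
      SS (Fin.append (fun i => W.mulVec (X₁ i) + b) (fun i => W.mulVec (X₂ i) + b)) ≠ 0 ∧
      r = SSR (fun i => W.mulVec (X₁ i) + b) (fun i => W.mulVec (X₂ i) + b)} lam := by
    constructor
    · exact ⟨1, Wu, 0, hden, hval.symm⟩
    · rintro r ⟨n, W, b, hne, rfl⟩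
      rw [hSSapp n W b] at hne
      have hDnn : 0 ≤ ∑ k, (fun j => W k j) ⬝ᵥ Nt.mulVec (fun j => W k j) :=
        Finset.sum_nonneg fun k _ => hqN0 _
      have hDpos : 0 < ∑ k, (fun j => W k j) ⬝ᵥ Nt.mulVec (fun j => W k j) :=
        lt_of_le_of_ne hDnn (Ne.symm hne)
      rw [SSR, hSSsum n W b, hSSapp n W b]
      rw [le_div_iff₀ hDpos, Finset.mul_sum]
      exact Finset.sum_le_sum fun k _ => hRay _
  have hLSSR : LSSR X₁ X₂ = lam := by
    rw [LSSR]
    exact hLeast.csInf_eq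
  refine ⟨hLSSR, ?_⟩
  have hproj1 : (fun i (_ : Fin 1) => u ⬝ᵥ X₁ i) = fun i => Wu.mulVec (X₁ i) + 0 := by
    funext i k
    simp only [Pi.add_apply, Pi.zero_apply, add_zero, mulVec, dotProduct]
    rfl
  have hproj2 : (fun i (_ : Fin 1) => u ⬝ᵥ X₂ i) = fun i => Wu.mulVec (X₂ i) + 0 := by
    funext i k
    simp only [Pi.add_apply, Pi.zero_apply, add_zero, mulVec, dotProduct]
    rfl
  rw [hLSSR, hproj1, hproj2, hval]
end

section
/- Let x_i, x_j, x_s, x_t be four points on the unit sphere in R^n (all of norm 1) such that the segment from x_i to x_j is parallel to the segment from x_s to x_t, i.e., x_j - x_i = k(x_t - x_s) for some nonzero real k. Then x_j · x_s = x_i · x_t, equivalently the angle ∠(x_j, x_s) equals the angle ∠(x_i, x_t) (measured at the origin). -/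
open Matrix

/-- if four points on the unit sphere in `ℝ^n` satisfy
`x_j - x_i = k(x_t - x_s)` with `k ≠ 0` (parallel chords), then `x_j · x_s = x_i · x_t`,
i.e. the corresponding central angles agree. -/
theorem parallel_chords_equal_inner {n : ℕ} (xi xj xs xt : Fin n → ℝ)
    (hxi : xi ⬝ᵥ xi = 1) (hxj : xj ⬝ᵥ xj = 1) (hxs : xs ⬝ᵥ xs = 1) (hxt : xt ⬝ᵥ xt = 1)
    (k : ℝ) (hk : k ≠ 0) (hpar : xj - xi = k • (xt - xs)) :
    xj ⬝ᵥ xs = xi ⬝ᵥ xt := by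
  have h1 := congrArg (fun v => v ⬝ᵥ (xt + xs)) hpar
  have h2 := congrArg (fun v => v ⬝ᵥ (xj + xi)) hpar
  simp only [sub_dotProduct, dotProduct_add, smul_dotProduct, smul_eq_mul] at h1 h2
  rw [dotProduct_comm xs xt] at h1
  rw [dotProduct_comm xt xj, dotProduct_comm xt xi, dotProduct_comm xs xj,
    dotProduct_comm xs xi, dotProduct_comm xi xj] at h2
  rw [hxt, hxs] at h1
  rw [hxj, hxi] at h2
  have h0 : k * (xj ⬝ᵥ xt + xi ⬝ᵥ xt - (xj ⬝ᵥ xs + xi ⬝ᵥ xs)) = 0 := by linarith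
  have h2' : xj ⬝ᵥ xt + xi ⬝ᵥ xt - (xj ⬝ᵥ xs + xi ⬝ᵥ xs) = 0 :=
    (mul_eq_zero.mp h0).resolve_left hk
  linarith [h1]
end
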